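/- arXiv:1903.00454 — 3 statements merged into one kernel-verified Lean document; each statement's English description precedes it below -/
import Mathlib

section
/- Let k be a field of characteristic not 2, R = k[α], R^s = k[α^2]. Then there is an isomorphism of R-bimodules (R ⊗_{R^s} R) ⊗_R (R ⊗_{R^s} R) ≅ (R ⊗_{R^s} R) ⊕ (R ⊗_{R^s} R). (This categorifies the relation b_s^2 = (v + v^{-1})b_s in the Hecke algebra of S_2.) -/
/-!
Soergel bimodules for SL₂: k a field of characteristic ≠ 2, R = k[α] (α = Polynomial.X),
R^s = k[α²] the invariants of α ↦ −α, and B_s = R ⊗_{R^s} R.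
-/

open TensorProduct Polynomial

noncomputable section

variable (k : Type) [Field k]

/-- The invariant subring R^s = k[α²] ⊆ R = k[α]. -/
def Rs : Subalgebra k (Polynomial k) := Algebra.adjoin k {(Polynomial.X : Polynomial k) ^ 2}

/-- The Soergel bimodule B_s = R ⊗_{R^s} R (as a commutative ring; the left action of R is
multiplication by f ⊗ 1 and the right action is multiplication by 1 ⊗ f). -/
abbrev Bs : Type := (Polynomial k) ⊗[Rs k] (Polynomial k)

/-- α/2 ∈ R. -/
def half : Polynomial k := Polynomial.C ((2 : k)⁻¹) * Polynomial.X

/-- Δ_s = (α/2) ⊗ 1 + 1 ⊗ (α/2) ∈ B_s. -/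
def Δs : Bs k := half k ⊗ₜ[Rs k] 1 + 1 ⊗ₜ[Rs k] half k

/-!
The polynomial ring R = k[α] is free over R^s = k[α²] with basis 1, α: the two summands of
f = f₀ + α f₁ (f₀, f₁ ∈ R^s) have degrees of different parity. Hence
R ⊗_{R^s} R ⊗_{R^s} R ≅ R ⊗_{R^s} (R^s ⊕ R^s) ⊗_{R^s} R ≅ B_s ⊕ B_s, and since this isomorphism
only acts on the middle factor it commutes with multiplication on the outer ones.
-/

section TensorBasis

variable {A S M T ι : Type*} [CommSemiring A] [Fintype ι] [DecidableEq ι]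

section Module

variable [AddCommMonoid S] [Module A S] [AddCommMonoid M] [Module A M]
  [AddCommMonoid T] [Module A T]

def Module.Basis.tensorTensorEquivPi (b : Module.Basis ι A M) :
    S ⊗[A] (M ⊗[A] T) ≃ₗ[A] (ι → S ⊗[A] T) :=
  TensorProduct.congr (.refl A S)
      (TensorProduct.congr b.equivFun (.refl A T) ≪≫ₗ TensorProduct.comm A _ T ≪≫ₗ
        piScalarRight A A T ι) ≪≫ₗ
    piRight A A S fun _ ↦ T

@[simp]
theorem Module.Basis.tensorTensorEquivPi_tmul (b : Module.Basis ι A M) (s : S) (m : M) (t : T) :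
    b.tensorTensorEquivPi (s ⊗ₜ (m ⊗ₜ t)) = fun i ↦ s ⊗ₜ (b.repr m i • t) := by
  ext i
  simp [Module.Basis.tensorTensorEquivPi]

end Module

variable [Semiring S] [Algebra A S] [Semiring M] [Algebra A M] [Semiring T] [Algebra A T]

theorem Module.Basis.tensorTensorEquivPi_tmul_one_mul (b : Module.Basis ι A M) (s : S)
    (x : S ⊗[A] (M ⊗[A] T)) :
    b.tensorTensorEquivPi ((s ⊗ₜ 1) * x) = (fun _ ↦ s ⊗ₜ 1) * b.tensorTensorEquivPi x := by
  suffices b.tensorTensorEquivPi.toLinearMap ∘ₗ LinearMap.mulLeft A (s ⊗ₜ[A] (1 : M ⊗[A] T)) =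
      LinearMap.mulLeft A (fun _ : ι ↦ s ⊗ₜ[A] (1 : T)) ∘ₗ b.tensorTensorEquivPi.toLinearMap from
    LinearMap.congr_fun this x
  refine TensorProduct.ext_threefold' fun s' m t ↦ ?_
  ext i
  simp

theorem Module.Basis.tensorTensorEquivPi_one_tmul_mul (b : Module.Basis ι A M) (t : T)
    (x : S ⊗[A] (M ⊗[A] T)) :
    b.tensorTensorEquivPi ((1 ⊗ₜ (1 ⊗ₜ t)) * x) =
      (fun _ ↦ 1 ⊗ₜ t) * b.tensorTensorEquivPi x := by
  suffices b.tensorTensorEquivPi.toLinearMap ∘ₗ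
        LinearMap.mulLeft A ((1 : S) ⊗ₜ[A] ((1 : M) ⊗ₜ[A] t)) =
      LinearMap.mulLeft A (fun _ : ι ↦ (1 : S) ⊗ₜ[A] t) ∘ₗ b.tensorTensorEquivPi.toLinearMap from
    LinearMap.congr_fun this x
  refine TensorProduct.ext_threefold' fun s m t' ↦ ?_
  ext i
  simp

end TensorBasis

section

variable {k}

theorem mem_Rs_iff_exists_expand {p : k[X]} : p ∈ Rs k ↔ ∃ q, expand k 2 q = p := by
  rw [Rs, Algebra.adjoin_singleton_eq_range_aeval]
  rfl

theorem even_natDegree_of_mem_Rs {p : k[X]} (hp : p ∈ Rs k) : Even p.natDegree := by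
  obtain ⟨q, rfl⟩ := mem_Rs_iff_exists_expand.mp hp
  simp [natDegree_expand]

theorem C_mul_X_sq_pow_mem_Rs (a : k) (m : ℕ) : C a * (X ^ 2) ^ m ∈ Rs k :=
  mem_Rs_iff_exists_expand.mpr ⟨C a * X ^ m, by simp⟩

theorem linearIndependent_one_X_over_Rs : LinearIndependent (Rs k) ![(1 : k[X]), X] := by
  refine LinearIndependent.pair_iff.mpr fun s t hst ↦ ?_
  have hs : (s : k[X]) = -((t : k[X]) * X) := by
    refine eq_neg_of_add_eq_zero_left ?_
    simpa [Subalgebra.smul_def] using hst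
  by_cases ht : t = 0
  · subst ht; simpa using hst
  have hodd : Odd (s : k[X]).natDegree := by
    rw [hs, natDegree_neg, natDegree_mul_X (by exact_mod_cast ht)]
    exact (even_natDegree_of_mem_Rs t.2).add_one
  exact absurd (even_natDegree_of_mem_Rs s.2) (Nat.not_even_iff_odd.mpr hodd)

theorem span_one_X_over_Rs : ⊤ ≤ Submodule.span (Rs k) (Set.range ![(1 : k[X]), X]) := by
  rintro g -
  induction g using Polynomial.induction_on' with
  | add p q hp hq => exact add_mem hp hq
  | monomial n a =>
    obtain ⟨m, rfl | rfl⟩ := Nat.even_or_odd' n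
    · have h : monomial (2 * m) a = (⟨_, C_mul_X_sq_pow_mem_Rs a m⟩ : Rs k) • (1 : k[X]) := by
        simp [Subalgebra.smul_def, ← pow_mul, C_mul_X_pow_eq_monomial]
      rw [h]
      exact Submodule.smul_mem _ _ (Submodule.subset_span ⟨0, rfl⟩)
    · have h : monomial (2 * m + 1) a = (⟨_, C_mul_X_sq_pow_mem_Rs a m⟩ : Rs k) • (X : k[X]) := by
        simp [Subalgebra.smul_def, ← pow_mul, C_mul_X_pow_eq_monomial]
      rw [h]
      exact Submodule.smul_mem _ _ (Submodule.subset_span ⟨1, rfl⟩)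

variable (k) in
def basisOneXOverRs : Module.Basis (Fin 2) (Rs k) k[X] :=
  .mk linearIndependent_one_X_over_Rs span_one_X_over_Rs

end

/-- B_s ⊗_R B_s is modelled as R ⊗_{R^s} R ⊗_{R^s} R, with the left and right actions of R given
by multiplication on the outer factors. -/
theorem Bs_squared_decomposition :
    ∃ e : ((Polynomial k) ⊗[Rs k] Bs k) ≃ₗ[Rs k] (Bs k × Bs k),
      (∀ (f : Polynomial k) (x : (Polynomial k) ⊗[Rs k] Bs k),
        e ((f ⊗ₜ[Rs k] (1 : Bs k)) * x)
          = (f ⊗ₜ[Rs k] (1 : Polynomial k), f ⊗ₜ[Rs k] (1 : Polynomial k)) * e x) ∧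
      (∀ (f : Polynomial k) (x : (Polynomial k) ⊗[Rs k] Bs k),
        e (((1 : Polynomial k) ⊗ₜ[Rs k] ((1 : Polynomial k) ⊗ₜ[Rs k] f)) * x)
          = ((1 : Polynomial k) ⊗ₜ[Rs k] f, (1 : Polynomial k) ⊗ₜ[Rs k] f) * e x) := by
  -- Stated with its type so that the domain carries the module structure of the statement
  -- (`Subalgebra.moduleLeft`), which agrees with the tensor-product one only after unfolding.
  let e : ((Polynomial k) ⊗[Rs k] Bs k) ≃ₗ[Rs k] (Bs k × Bs k) :=
    (basisOneXOverRs k).tensorTensorEquivPi ≪≫ₗ LinearEquiv.finTwoArrow (Rs k) (Bs k)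
  refine ⟨e, fun f x ↦ ?_, fun f x ↦ ?_⟩
  · exact congrArg (LinearEquiv.finTwoArrow (Rs k) (Bs k))
      ((basisOneXOverRs k).tensorTensorEquivPi_tmul_one_mul f x)
  · exact congrArg (LinearEquiv.finTwoArrow (Rs k) (Bs k))
      ((basisOneXOverRs k).tensorTensorEquivPi_one_tmul_mul f x)

end
end

section
/- Let k be a field of characteristic not 2, R = k[α] graded with deg α = 2, R^s = k[α^2], B_s = R ⊗_{R^s} R (a graded R-bimodule). Then the space of R-bimodule homomorphisms from B_s to R is a free left R-module of rank 1 generated by the multiplication map m: f ⊗ g ↦ fg, and the space of R-bimodule homomorphisms from R to B_s is a free left R-module of rank 1 generated by the map f ↦ f·Δ_s where Δ_s = (α/2) ⊗ 1 + 1 ⊗ (α/2). -/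
/-!
Soergel bimodules for SL₂: k a field of characteristic ≠ 2, R = k[α] (α = Polynomial.X),
R^s = k[α²] the invariants of α ↦ −α, and B_s = R ⊗_{R^s} R.
-/

open TensorProduct Polynomial

noncomputable section

variable (k : Type) [Field k]

/-! ### Auxiliary machinery -/

/-- The involution α ↦ -α. -/
def sInv : Polynomial k →ₐ[k] Polynomial k := Polynomial.aeval (-Polynomial.X)

lemma sInv_fixed {p : Polynomial k} (hp : p ∈ Rs k) : sInv k p = p := by
  have h : Rs k ≤ AlgHom.equalizer (sInv k) (AlgHom.id k (Polynomial k)) := by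
    apply Algebra.adjoin_le
    intro x hx
    rw [Set.mem_singleton_iff] at hx
    subst hx
    show sInv k (X ^ 2) = X ^ 2
    simp [sInv]
  exact h hp

lemma Rs_smul (c : Rs k) (x : Polynomial k) : c • x = (c : Polynomial k) * x := by
  rw [Subalgebra.smul_def, smul_eq_mul]

lemma sInv_X : sInv k X = -X := by simp [sInv]

lemma sInv_C (a : k) : sInv k (C a) = C a := by
  simp [sInv]

/-- Odd part: O g = (g - s g)/2. -/
def Omap : Polynomial k →ₗ[Rs k] Polynomial k where
  toFun g := Polynomial.C (2 : k)⁻¹ * (g - sInv k g)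
  map_add' g h := by simp only [map_add]; ring
  map_smul' c g := by
    simp only [RingHom.id_apply, Rs_smul, map_mul, sInv_fixed k c.2]
    ring

/-- Odd-coordinate map B_s → R, f ⊗ g ↦ f · O(g). -/
def thetaO : Bs k →ₗ[Rs k] Polynomial k :=
  (LinearMap.mul' (Rs k) (Polynomial k)).comp
    (TensorProduct.map LinearMap.id (Omap k))

lemma thetaO_tmul (f g : Polynomial k) :
    thetaO k (f ⊗ₜ[Rs k] g) = f * Omap k g := by
  exact rfl

variable {k}

lemma htwo (p2 : (2 : k) ≠ 0) : Polynomial.C (2 : k)⁻¹ * 2 = 1 := by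
  rw [← map_ofNat (C : k →+* Polynomial k) 2, ← C_mul, inv_mul_cancel₀ p2, C_1]

lemma Omap_one : Omap k 1 = 0 := by
  show Polynomial.C (2 : k)⁻¹ * (1 - sInv k 1) = 0
  rw [map_one]; ring

lemma Omap_X (p2 : (2 : k) ≠ 0) : Omap k X = X := by
  show Polynomial.C (2 : k)⁻¹ * (X - sInv k X) = X
  rw [sInv_X]
  have := htwo p2
  linear_combination (X : Polynomial k) * this

lemma Omap_sq : Omap k ((X : Polynomial k) * X) = 0 := by
  show Polynomial.C (2 : k)⁻¹ * (X * X - sInv k (X * X)) = 0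
  have h : sInv k ((X : Polynomial k) * X) = X * X := by
    rw [map_mul, sInv_X]; ring
  rw [h]; ring

lemma sInv_half : sInv k (half k) = -half k := by
  show sInv k (C (2 : k)⁻¹ * X) = -(C (2 : k)⁻¹ * X)
  rw [map_mul, sInv_C, sInv_X]; ring

lemma Omap_half (p2 : (2 : k) ≠ 0) : Omap k (half k) = half k := by
  show Polynomial.C (2 : k)⁻¹ * (half k - sInv k (half k)) = half k
  rw [sInv_half]
  have := htwo p2
  linear_combination (half k) * this

lemma Xsq_mem : (X : Polynomial k) ^ 2 ∈ Rs k :=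
  Algebra.subset_adjoin (Set.mem_singleton _)

lemma C_mem (a : k) : (C a : Polynomial k) ∈ Rs k := by
  rw [← Polynomial.algebraMap_eq]
  exact Subalgebra.algebraMap_mem _ a

lemma tmul_scalar (c : Rs k) (v w : Polynomial k) :
    v ⊗ₜ[Rs k] ((c : Polynomial k) * w) = ((c : Polynomial k) * v) ⊗ₜ[Rs k] w := by
  have h1 : v ⊗ₜ[Rs k] ((c : Polynomial k) * w) = c • (v ⊗ₜ[Rs k] w) := by
    rw [← Rs_smul]
    exact (TensorProduct.mk (Rs k) (Polynomial k) (Polynomial k) v).map_smul c w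
  have h2 : ((c : Polynomial k) * v) ⊗ₜ[Rs k] w = c • (v ⊗ₜ[Rs k] w) := by
    rw [← Rs_smul]
    exact (TensorProduct.smul_tmul' c v w).symm
  rw [h1, h2]

/-- Every element of B_s can be written u ⊗ 1 + v ⊗ X. -/
lemma exists_repr (x : Bs k) :
    ∃ u v : Polynomial k, x = u ⊗ₜ[Rs k] 1 + v ⊗ₜ[Rs k] X := by
  induction x using TensorProduct.induction_on with
  | zero => exact ⟨0, 0, by simp⟩
  | add a b ha hb =>
    obtain ⟨u, v, rfl⟩ := ha
    obtain ⟨u', v', rfl⟩ := hb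
    exact ⟨u + u', v + v', by rw [add_tmul, add_tmul]; abel⟩
  | tmul f g =>
    induction g using Polynomial.induction_on generalizing f with
    | C a =>
      refine ⟨C a * f, 0, ?_⟩
      have h1 := tmul_scalar (⟨C a, C_mem a⟩ : Rs k) f 1
      rw [mul_one] at h1
      rw [h1]; simp
    | add p q hp hq =>
      obtain ⟨u, v, hu⟩ := hp f
      obtain ⟨u', v', hu'⟩ := hq f
      refine ⟨u + u', v + v', ?_⟩
      rw [TensorProduct.tmul_add, hu, hu', add_tmul, add_tmul]
      abel
    | monomial n a ih =>
      obtain ⟨u, v, hu⟩ := ih f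
      refine ⟨X ^ 2 * v, u, ?_⟩
      have hme : f ⊗ₜ[Rs k] (C a * X ^ (n + 1)) = (f ⊗ₜ[Rs k] (C a * X ^ n)) * (1 ⊗ₜ[Rs k] X) := by
        rw [Algebra.TensorProduct.tmul_mul_tmul, mul_one]
        congr 1
        ring
      have h2 : v ⊗ₜ[Rs k] ((X : Polynomial k) * X) = (X ^ 2 * v) ⊗ₜ[Rs k] 1 := by
        have h3 : (X : Polynomial k) * X = (X ^ 2 : Polynomial k) * 1 := by ring
        rw [h3]
        exact tmul_scalar (⟨X ^ 2, Xsq_mem⟩ : Rs k) v 1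
      rw [hme, hu, add_mul, Algebra.TensorProduct.tmul_mul_tmul,
        Algebra.TensorProduct.tmul_mul_tmul]
      simp only [mul_one, one_mul]
      rw [h2]
      abel

/-- the space of R-bimodule homomorphisms B_s → R is a free left R-module of
rank 1 generated by the multiplication map m, and the space of R-bimodule homomorphisms
R → B_s is a free left R-module of rank 1 generated by f ↦ f·Δ_s. -/
theorem hom_spaces_free_rank_one (hchar : ringChar k ≠ 2) :
    (∀ φ : Bs k →ₗ[Rs k] Polynomial k,
      (∀ (f : Polynomial k) (x : Bs k),
        φ ((f ⊗ₜ[Rs k] (1 : Polynomial k)) * x) = f * φ x) →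
      (∀ (f : Polynomial k) (x : Bs k),
        φ (x * ((1 : Polynomial k) ⊗ₜ[Rs k] f)) = φ x * f) →
      ∃! c : Polynomial k, φ = c • LinearMap.mul' (Rs k) (Polynomial k)) ∧
    (∀ ψ : Polynomial k →ₗ[Rs k] Bs k,
      (∀ f g : Polynomial k, ψ (f * g) = (f ⊗ₜ[Rs k] (1 : Polynomial k)) * ψ g) →
      (∀ f g : Polynomial k, ψ (g * f) = ψ g * ((1 : Polynomial k) ⊗ₜ[Rs k] f)) →
      ∃! c : Polynomial k, ∀ f : Polynomial k,
        ψ f = (c ⊗ₜ[Rs k] (1 : Polynomial k)) *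
          ((f * half k) ⊗ₜ[Rs k] (1 : Polynomial k) + f ⊗ₜ[Rs k] half k)) := by
  have p2 : (2 : k) ≠ 0 := Ring.two_ne_zero hchar
  constructor
  · -- Part 1
    intro φ hl hr
    refine ⟨φ (1 ⊗ₜ[Rs k] 1), ?_, ?_⟩
    · apply TensorProduct.ext'
      intro f g
      have h1 : f ⊗ₜ[Rs k] g = (f ⊗ₜ[Rs k] (1 : Polynomial k)) * (1 ⊗ₜ[Rs k] g) := by
        rw [Algebra.TensorProduct.tmul_mul_tmul, mul_one, one_mul]
      have h2 : (1 : Polynomial k) ⊗ₜ[Rs k] g =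
          ((1 : Polynomial k) ⊗ₜ[Rs k] (1 : Polynomial k)) * (1 ⊗ₜ[Rs k] g) := by
        rw [Algebra.TensorProduct.tmul_mul_tmul, mul_one, one_mul]
      rw [h1]; erw [hl f]
      rw [h2]; erw [hr g (1 ⊗ₜ[Rs k] 1)]
      erw [LinearMap.smul_apply]
      simp only [LinearMap.smul_apply, Algebra.TensorProduct.tmul_mul_tmul,
        LinearMap.mul'_apply, smul_eq_mul, one_mul, mul_one]
      ring
    · intro c hc
      rw [hc]
      erw [LinearMap.smul_apply, LinearMap.mul'_apply, smul_eq_mul]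
      ring
  · -- Part 2
    intro ψ hl hr
    obtain ⟨u, v, he⟩ := exists_repr (ψ 1)
    -- the commutation relation
    have hcomm : (X ⊗ₜ[Rs k] (1 : Polynomial k)) * ψ 1 = ψ 1 * (1 ⊗ₜ[Rs k] X) := by
      have h1 := hl X 1
      have h2 := hr X 1
      rw [mul_one] at h1
      rw [one_mul] at h2
      rw [← h1, ← h2]
    rw [he] at hcomm
    -- expand both sides of the commutation relation as sums of pure tensors
    have hclhs : (X ⊗ₜ[Rs k] (1 : Polynomial k)) * (u ⊗ₜ[Rs k] 1 + v ⊗ₜ[Rs k] X)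
        = (X * u) ⊗ₜ[Rs k] (1 : Polynomial k) + (X * v) ⊗ₜ[Rs k] X := by
      rw [mul_add, Algebra.TensorProduct.tmul_mul_tmul, Algebra.TensorProduct.tmul_mul_tmul]
      simp only [one_mul, mul_one]
    have hcrhs : (u ⊗ₜ[Rs k] 1 + v ⊗ₜ[Rs k] X) * ((1 : Polynomial k) ⊗ₜ[Rs k] X)
        = u ⊗ₜ[Rs k] (X : Polynomial k) + v ⊗ₜ[Rs k] ((X : Polynomial k) * X) := by
      rw [add_mul, Algebra.TensorProduct.tmul_mul_tmul, Algebra.TensorProduct.tmul_mul_tmul]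
      simp only [one_mul, mul_one]
    rw [hclhs, hcrhs] at hcomm
    have hth := congrArg (thetaO k) hcomm
    rw [map_add, map_add, thetaO_tmul, thetaO_tmul, thetaO_tmul, thetaO_tmul,
      Omap_one, Omap_X p2, Omap_sq] at hth
    have huv : u = v * X := by
      have h1 : (v * X) * X = u * X := by linear_combination hth
      exact (mul_right_cancel₀ X_ne_zero h1).symm
    -- the generator
    refine ⟨2 * v, ?_, ?_⟩
    · intro f
      have hval : ψ f = (f ⊗ₜ[Rs k] (1 : Polynomial k)) * ψ 1 := by
        have := hl f 1
        rwa [mul_one] at this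
      rw [hval, he, huv, mul_add, mul_add, Algebra.TensorProduct.tmul_mul_tmul,
        Algebra.TensorProduct.tmul_mul_tmul, Algebra.TensorProduct.tmul_mul_tmul,
        Algebra.TensorProduct.tmul_mul_tmul]
      simp only [one_mul, mul_one]
      have hh : (2 * v * (f * half k)) ⊗ₜ[Rs k] (1 : Polynomial k) =
          (f * (v * X)) ⊗ₜ[Rs k] (1 : Polynomial k) := by
        congr 1
        show 2 * v * (f * (C (2 : k)⁻¹ * X)) = f * (v * X)
        have := htwo p2
        linear_combination v * f * X * this
      have hh2 : (2 * v * f) ⊗ₜ[Rs k] half k = (f * v) ⊗ₜ[Rs k] X := by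
        show (2 * v * f) ⊗ₜ[Rs k] (C (2 : k)⁻¹ * X) = (f * v) ⊗ₜ[Rs k] X
        have h1 := tmul_scalar (⟨C (2 : k)⁻¹, C_mem _⟩ : Rs k) (2 * v * f) X
        rw [h1]
        congr 1
        have := htwo p2
        linear_combination v * f * this
      rw [hh, hh2]
    · -- uniqueness
      intro c hc
      have h1' : u ⊗ₜ[Rs k] 1 + v ⊗ₜ[Rs k] X =
          (c * (1 * half k)) ⊗ₜ[Rs k] ((1 : Polynomial k) * 1)
          + (c * 1) ⊗ₜ[Rs k] ((1 : Polynomial k) * half k) := by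
        rw [← he, hc 1, mul_add, Algebra.TensorProduct.tmul_mul_tmul,
          Algebra.TensorProduct.tmul_mul_tmul]
      simp only [one_mul, mul_one] at h1'
      have hth := congrArg (thetaO k) h1'
      rw [map_add, map_add, thetaO_tmul, thetaO_tmul, thetaO_tmul, thetaO_tmul,
        Omap_one, Omap_X p2, Omap_half p2] at hth
      -- hth : u * 0 + v * X = c * half k * 0 + c * half k
      show c = 2 * v
      have hX : (X : Polynomial k) ≠ 0 := X_ne_zero
      have h2 : c * C (2 : k)⁻¹ * X = v * X := by
        have hh : (half k : Polynomial k) = C (2 : k)⁻¹ * X := rfl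
        rw [hh] at hth
        linear_combination - hth
      have h3 : c * C (2 : k)⁻¹ = v := mul_right_cancel₀ hX h2
      have := htwo p2
      linear_combination 2 * h3 - c * this

end
end

section
/- Let k be a field of characteristic not 2, R = k[α], R^s = k[α^2], B_s = R ⊗_{R^s} R. Then B_s is indecomposable as a graded R-bimodule when graded with deg α = 2: its graded endomorphism ring of degree 0, i.e. degree-zero R-bimodule endomorphisms of B_s, is isomorphic to k, hence is local. -/
/-!
Soergel bimodules for SL₂: k a field of characteristic ≠ 2, R = k[α] (α = Polynomial.X),
R^s = k[α²] the invariants of α ↦ −α, and B_s = R ⊗_{R^s} R.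
-/

open TensorProduct Polynomial

noncomputable section

variable (k : Type) [Field k]

/-- The n-th graded piece of B_s = R ⊗_{R^s} R (1): spanned over k by the monomials
α^i ⊗ α^j, which have degree 2i + 2j − 1 (with deg α = 2 and the grading shift (1)). -/
def BsGradedPiece (n : ℤ) : Submodule k (Bs k) :=
  Submodule.span k {x : Bs k | ∃ i j : ℕ,
    x = (((Polynomial.X : Polynomial k) ^ i) ⊗ₜ[Rs k] ((Polynomial.X : Polynomial k) ^ j) : Bs k) ∧ (2 * i + 2 * j : ℤ) - 1 = n}

/-!
Only the monomial 1 ⊗ 1 has degree −1, so a degree-zero endomorphism φ sends 1 to a scalar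
c • 1. A bimodule endomorphism of the commutative ring B_s is multiplication by φ 1, hence
φ = c • id, and c is unique because the multiplication map B_s → R is injective on k • 1. An idempotent scalar is 0 or 1.
-/

theorem TensorProduct.apply_eq_mul_apply_one {R A B F : Type*} [CommSemiring R]
    [CommSemiring A] [Algebra R A] [CommSemiring B] [Algebra R B]
    [FunLike F (A ⊗[R] B) (A ⊗[R] B)] [AddMonoidHomClass F (A ⊗[R] B) (A ⊗[R] B)] (φ : F)
    (hl : ∀ (a : A) (x : A ⊗[R] B), φ ((a ⊗ₜ[R] (1 : B)) * x) = (a ⊗ₜ[R] (1 : B)) * φ x)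
    (hr : ∀ (b : B) (x : A ⊗[R] B), φ (x * ((1 : A) ⊗ₜ[R] b)) = φ x * ((1 : A) ⊗ₜ[R] b))
    (x : A ⊗[R] B) : φ x = x * φ 1 := by
  induction x using TensorProduct.induction_on with
  | zero => simp
  | tmul a b =>
    have hab : a ⊗ₜ[R] b = (a ⊗ₜ[R] (1 : B)) * 1 * ((1 : A) ⊗ₜ[R] b) := by
      rw [mul_one, Algebra.TensorProduct.tmul_mul_tmul, mul_one, one_mul]
    rw [hab, hr, hl, mul_one, mul_right_comm]
  | add x y hx hy => rw [map_add, hx, hy, add_mul]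

namespace Bs

theorem gradedPiece_neg_one : BsGradedPiece k (-1) = k ∙ (1 : Bs k) := by
  rw [BsGradedPiece]
  congr 1
  ext x
  constructor
  · rintro ⟨i, j, rfl, hij⟩
    obtain ⟨rfl, rfl⟩ : i = 0 ∧ j = 0 := by omega
    simp [Algebra.TensorProduct.one_def]
  · rintro rfl
    exact ⟨0, 0, by simp [Algebra.TensorProduct.one_def], by norm_num⟩

theorem smul_one_injective : Function.Injective (fun c : k => c • (1 : Bs k)) := by
  intro c c' h
  have hmul := congrArg (Algebra.TensorProduct.lmul' (R := Rs k) (S := Polynomial k)) h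
  simpa [Algebra.TensorProduct.one_def, TensorProduct.smul_tmul', Algebra.smul_def] using hmul

theorem smul_id_injective :
    Function.Injective (fun c : k => c • (LinearMap.id : Bs k →ₗ[k] Bs k)) :=
  fun _ _ h => smul_one_injective k (LinearMap.congr_fun h 1)

theorem exists_eq_smul_id (φ : Bs k →ₗ[k] Bs k)
    (hl : ∀ (f : Polynomial k) (x : Bs k),
      φ ((f ⊗ₜ[Rs k] (1 : Polynomial k)) * x) = (f ⊗ₜ[Rs k] (1 : Polynomial k)) * φ x)
    (hr : ∀ (f : Polynomial k) (x : Bs k),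
      φ (x * ((1 : Polynomial k) ⊗ₜ[Rs k] f)) = φ x * ((1 : Polynomial k) ⊗ₜ[Rs k] f))
    (hg : (BsGradedPiece k (-1)).map φ ≤ BsGradedPiece k (-1)) :
    ∃ c : k, φ = c • LinearMap.id := by
  have hφ1 : φ 1 ∈ k ∙ (1 : Bs k) := by
    rw [← gradedPiece_neg_one]
    exact hg ⟨1, by rw [gradedPiece_neg_one]; exact Submodule.mem_span_singleton_self 1, rfl⟩
  obtain ⟨c, hc⟩ := Submodule.mem_span_singleton.mp hφ1
  refine ⟨c, LinearMap.ext fun x => ?_⟩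
  rw [TensorProduct.apply_eq_mul_apply_one φ hl hr, ← hc, mul_smul_comm, mul_one,
    LinearMap.smul_apply, LinearMap.id_apply]

end Bs

theorem Bs_indecomposable :
    (∀ φ : Bs k →ₗ[k] Bs k,
      (∀ (f : Polynomial k) (x : Bs k),
        φ ((f ⊗ₜ[Rs k] (1 : Polynomial k)) * x) = (f ⊗ₜ[Rs k] (1 : Polynomial k)) * φ x) →
      (∀ (f : Polynomial k) (x : Bs k),
        φ (x * ((1 : Polynomial k) ⊗ₜ[Rs k] f)) = φ x * ((1 : Polynomial k) ⊗ₜ[Rs k] f)) →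
      (∀ n : ℤ, (BsGradedPiece k n).map φ ≤ BsGradedPiece k n) →
      ∃! c : k, φ = c • LinearMap.id) ∧
    (∀ φ : Bs k →ₗ[k] Bs k,
      (∀ (f : Polynomial k) (x : Bs k),
        φ ((f ⊗ₜ[Rs k] (1 : Polynomial k)) * x) = (f ⊗ₜ[Rs k] (1 : Polynomial k)) * φ x) →
      (∀ (f : Polynomial k) (x : Bs k),
        φ (x * ((1 : Polynomial k) ⊗ₜ[Rs k] f)) = φ x * ((1 : Polynomial k) ⊗ₜ[Rs k] f)) →
      (∀ n : ℤ, (BsGradedPiece k n).map φ ≤ BsGradedPiece k n) →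
      φ.comp φ = φ → φ = 0 ∨ φ = LinearMap.id) := by
  constructor
  · intro φ hl hr hg
    obtain ⟨c, rfl⟩ := Bs.exists_eq_smul_id k φ hl hr (hg (-1))
    exact ⟨c, rfl, fun c' hc' => Bs.smul_id_injective k hc'.symm⟩
  · intro φ hl hr hg hidem
    obtain ⟨c, rfl⟩ := Bs.exists_eq_smul_id k φ hl hr (hg (-1))
    have hc : IsIdempotentElem c := Bs.smul_id_injective k <| by
      simpa only [LinearMap.smul_comp, LinearMap.comp_smul, LinearMap.id_comp, smul_smul]
        using hidem
    rcases IsIdempotentElem.iff_eq_zero_or_one.mp hc with rfl | rfl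
    · exact Or.inl (zero_smul k _)
    · exact Or.inr (one_smul k _)

end
end
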